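/- arXiv:1002.1032 — 8 statements merged into one kernel-verified Lean document; each statement's English description precedes it below -/
import Mathlib

section
/- Let n be a positive integer, κ an integer, m a positive integer, and let A be an n×n (0,1)-matrix all of whose row sums and column sums equal κ. Define δ : ℤ → ℤ by δ(x) := n − x² + x − 1. If Θ^m(A) = A, then δ^m(κ) = κ, where δ^m denotes the m-fold iterate of δ. -/
/-!
`Θ(A)` is symmetric, and when every line sum of `A` is `s`, every row sum of `A Aᵀ` is `s²`, so
every line sum of `Θ(A)` is `δ(s) = n - s² + s - 1`. By induction every line sum of `Θᵗ(A)` is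
`δᵗ(s)`; for a fixed point `Θᵐ(A) = A` the first row sum is then both `κ` and `δᵐ(κ)`.
-/

open Matrix BigOperators

/-- The Hoffman–Singleton operator `Θ(A) = (s-1)·I_n + J_n - A·Aᵀ`, where `s` is the sum of
the first row of `A`. -/
def ThetaGen {n : ℕ} (A : Matrix (Fin n) (Fin n) ℤ) : Matrix (Fin n) (Fin n) ℤ :=
  if h : 0 < n then
    ((∑ j, A ⟨0, h⟩ j) - 1) • (1 : Matrix (Fin n) (Fin n) ℤ)
      + Matrix.of (fun _ _ => (1 : ℤ)) - A * Aᵀ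
  else 0

section LineSums

variable {ι ι' R : Type*} [Fintype ι] [Fintype ι']

def IsLineRegular [AddCommMonoid R] (A : Matrix ι ι R) (s : R) : Prop :=
  (∀ i, ∑ j, A i j = s) ∧ ∀ j, ∑ i, A i j = s

theorem IsLineRegular.of_isSymm [AddCommMonoid R] {A : Matrix ι ι R} (hA : A.IsSymm) {s : R}
    (hrow : ∀ i, ∑ j, A i j = s) : IsLineRegular A s :=
  ⟨hrow, fun j => by simpa only [hA.apply] using hrow j⟩

theorem IsLineRegular.eq_of_nonempty [AddCommMonoid R] [Nonempty ι] {A : Matrix ι ι R} {s t : R}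
    (hs : IsLineRegular A s) (ht : IsLineRegular A t) : s = t :=
  let i := Classical.arbitrary ι
  (hs.1 i).symm.trans (ht.1 i)

theorem sum_mul_transpose_apply [CommSemiring R] (A : Matrix ι ι' R) {r c : R}
    (hrow : ∀ i, ∑ k, A i k = r) (hcol : ∀ k, ∑ i, A i k = c) (i : ι) :
    ∑ j, (A * Aᵀ) i j = r * c := by
  simp only [mul_apply, transpose_apply]
  rw [Finset.sum_comm]
  simp_rw [← Finset.mul_sum, hcol, ← Finset.sum_mul, hrow]

end LineSums

section Theta

variable {n : ℕ}

def thetaLineSum (n : ℕ) (s : ℤ) : ℤ := n - s ^ 2 + s - 1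

theorem isSymm_thetaGen (A : Matrix (Fin n) (Fin n) ℤ) : (ThetaGen A).IsSymm := by
  unfold ThetaGen
  split_ifs
  · refine ((isSymm_one.smul _).add ?_).sub (isSymm_mul_transpose_self A)
    exact IsSymm.ext fun _ _ => rfl
  · exact IsSymm.ext fun _ _ => rfl

theorem sum_thetaGen_apply (hn : 0 < n) {A : Matrix (Fin n) (Fin n) ℤ} {s : ℤ}
    (hA : IsLineRegular A s) (i : Fin n) :
    ∑ j, ThetaGen A i j = thetaLineSum n s := by
  simp only [ThetaGen, dif_pos hn, hA.1, Matrix.sub_apply, Matrix.add_apply, Matrix.smul_apply,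
    of_apply, Finset.sum_sub_distrib, Finset.sum_add_distrib,
    sum_mul_transpose_apply A hA.1 hA.2 i]
  simp only [one_apply, Int.zsmul_eq_mul, mul_ite, mul_one, mul_zero, Finset.sum_ite_eq,
    Finset.mem_univ, ↓reduceIte, Finset.sum_const, Finset.card_univ, Fintype.card_fin,
    Int.nsmul_eq_mul, thetaLineSum]
  ring

theorem IsLineRegular.thetaGen (hn : 0 < n) {A : Matrix (Fin n) (Fin n) ℤ} {s : ℤ}
    (hA : IsLineRegular A s) : IsLineRegular (ThetaGen A) (thetaLineSum n s) :=
  .of_isSymm (isSymm_thetaGen A) (sum_thetaGen_apply hn hA)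

theorem IsLineRegular.iterate_thetaGen (hn : 0 < n) {A : Matrix (Fin n) (Fin n) ℤ} {s : ℤ}
    (hA : IsLineRegular A s) (t : ℕ) :
    IsLineRegular (ThetaGen^[t] A) ((thetaLineSum n)^[t] s) := by
  induction t with
  | zero => exact hA
  | succ t ih =>
    rw [Function.iterate_succ_apply', Function.iterate_succ_apply']
    exact ih.thetaGen hn

end Theta

theorem stmt_5_general (n : ℕ) (hn : 0 < n) (κ : ℤ) (m : ℕ)
    (A : Matrix (Fin n) (Fin n) ℤ)
    (hrow : ∀ i, ∑ j, A i j = κ) (hcol : ∀ j, ∑ i, A i j = κ)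
    (hfix : ThetaGen^[m] A = A) :
    (fun x : ℤ => (n : ℤ) - x ^ 2 + x - 1)^[m] κ = κ := by
  have hA : IsLineRegular A κ := ⟨hrow, hcol⟩
  have hiter := hA.iterate_thetaGen hn m
  rw [hfix] at hiter
  have : Nonempty (Fin n) := ⟨⟨0, hn⟩⟩
  exact hiter.eq_of_nonempty hA

theorem stmt_5 (n : ℕ) (hn : 0 < n) (κ : ℤ) (m : ℕ) (hm : 0 < m)
    (A : Matrix (Fin n) (Fin n) ℤ)
    (h01 : ∀ i j, A i j = 0 ∨ A i j = 1)
    (hrow : ∀ i, ∑ j, A i j = κ) (hcol : ∀ j, ∑ i, A i j = κ)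
    (hfix : ThetaGen^[m] A = A) :
    (fun x : ℤ => (n : ℤ) - x ^ 2 + x - 1)^[m] κ = κ :=
  stmt_5_general n hn κ m A hrow hcol hfix
end

section
/- Let κ be a positive integer, let n = κ² + 1, and let A be an n×n (0,1)-matrix all of whose row sums and column sums equal κ. If Θ_κ^m(A) = A for some positive integer m, then A is J₂-free. -/
open Matrix BigOperators

/-- The Hoffman–Singleton operator `Θ_κ(A) = (κ-1)·I_n + J_n - A·Aᵀ`. -/
def Theta (n : ℕ) (κ : ℤ) (A : Matrix (Fin n) (Fin n) ℤ) : Matrix (Fin n) (Fin n) ℤ :=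
  (κ - 1) • (1 : Matrix (Fin n) (Fin n) ℤ) + Matrix.of (fun _ _ => (1 : ℤ)) - A * Aᵀ

/-- A matrix is `J₂`-free if it has no all-one `2×2` submatrix. -/
def J2Free {n : ℕ} (M : Matrix (Fin n) (Fin n) ℤ) : Prop :=
  ¬ ∃ i l j k : Fin n, i ≠ l ∧ j ≠ k ∧ M i j = 1 ∧ M i k = 1 ∧ M l j = 1 ∧ M l k = 1

/-!
The diagonal entry of `Θ_κ(B)` in row `i` is `κ - ∑ₛ B i s ^ 2`. When the row sums of `B` are `κ`,
this equals `∑ₛ (B i s - B i s ^ 2) ≤ 0`, with equality exactly when row `i` is a `(0,1)`-row;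
so if `Θ_κ(B)` is a `(0,1)`-matrix, so is `B`. For `n = κ² + 1`, `Θ_κ` preserves the line sums `κ`,
hence going backwards along the cycle `A, Θ_κ A, …, Θ_κ^m A = A` shows that `Θ_κ A` is a
`(0,1)`-matrix. Its off-diagonal entries `1 - ∑ₛ A i s * A l s` are then nonnegative: two distinct
rows of `A` share at most one column of ones.
-/

section

variable {n : ℕ} {κ : ℤ}

def IsZeroOne (B : Matrix (Fin n) (Fin n) ℤ) : Prop :=
  ∀ i j, B i j = 0 ∨ B i j = 1

def HasLineSums (B : Matrix (Fin n) (Fin n) ℤ) (r : ℤ) : Prop :=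
  (∀ i, ∑ j, B i j = r) ∧ ∀ j, ∑ i, B i j = r

lemma theta_apply (B : Matrix (Fin n) (Fin n) ℤ) (i j : Fin n) :
    Theta n κ B i j = (κ - 1) * (if i = j then 1 else 0) + 1 - ∑ s, B i s * B j s := by
  simp only [Theta, Matrix.sub_apply, Matrix.add_apply, Matrix.smul_apply, Matrix.one_apply,
    Matrix.of_apply, Matrix.mul_apply, Matrix.transpose_apply, smul_eq_mul]

lemma theta_apply_self (B : Matrix (Fin n) (Fin n) ℤ) (i : Fin n) :
    Theta n κ B i i = κ - ∑ s, B i s ^ 2 := by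
  simp only [theta_apply, if_pos, sq]
  ring

lemma theta_apply_of_ne (B : Matrix (Fin n) (Fin n) ℤ) {i l : Fin n} (hil : i ≠ l) :
    Theta n κ B i l = 1 - ∑ s, B i s * B l s := by
  simp [theta_apply, hil]

lemma transpose_theta (B : Matrix (Fin n) (Fin n) ℤ) : (Theta n κ B)ᵀ = Theta n κ B := by
  ext i j
  simp only [transpose_apply, theta_apply, eq_comm (a := j), mul_comm (B j _)]

lemma theta_row_sum (B : Matrix (Fin n) (Fin n) ℤ) {r c : ℤ} (i : Fin n)
    (hrow : ∑ j, B i j = r) (hcol : ∀ s, ∑ j, B j s = c) :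
    ∑ j, Theta n κ B i j = κ - 1 + n - r * c := by
  have hgram : ∑ j, ∑ s, B i s * B j s = r * c := by
    rw [Finset.sum_comm]
    simp only [← Finset.mul_sum, hcol, ← Finset.sum_mul, hrow]
  simp only [theta_apply, Finset.sum_sub_distrib, Finset.sum_add_distrib, hgram]
  simp

lemma HasLineSums.theta {κ : ℕ} {B : Matrix (Fin (κ ^ 2 + 1)) (Fin (κ ^ 2 + 1)) ℤ}
    (hB : HasLineSums B κ) : HasLineSums (Theta (κ ^ 2 + 1) κ B) κ := by
  have hrow : ∀ i, ∑ j, Theta (κ ^ 2 + 1) κ B i j = κ := fun i => by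
    rw [theta_row_sum B i (hB.1 i) hB.2]
    push_cast
    ring
  refine ⟨hrow, fun j => ?_⟩
  rw [← transpose_theta]
  exact hrow j

lemma eq_zero_or_eq_one_of_theta_apply_self_nonneg {B : Matrix (Fin n) (Fin n) ℤ} {i : Fin n}
    (hrow : ∑ j, B i j = κ) (hdiag : 0 ≤ Theta n κ B i i) (j : Fin n) :
    B i j = 0 ∨ B i j = 1 := by
  have hdefect : ∀ s ∈ Finset.univ, 0 ≤ B i s ^ 2 - B i s := fun s _ => by
    linarith [Int.le_self_sq (B i s)]
  have hsum : ∑ s, (B i s ^ 2 - B i s) = 0 := by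
    rw [theta_apply_self, ← hrow] at hdiag
    exact le_antisymm (by rw [Finset.sum_sub_distrib]; linarith) (Finset.sum_nonneg hdefect)
  have hj : B i j * (B i j - 1) = 0 := by
    rw [← (Finset.sum_eq_zero_iff_of_nonneg hdefect).mp hsum j (Finset.mem_univ j)]
    ring
  rcases mul_eq_zero.mp hj with h | h
  · exact Or.inl h
  · exact Or.inr (by linarith)

lemma IsZeroOne.of_theta {B : Matrix (Fin n) (Fin n) ℤ}
    (hrow : ∀ i, ∑ j, B i j = κ) (hΘ : IsZeroOne (Theta n κ B)) : IsZeroOne B :=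
  fun i => eq_zero_or_eq_one_of_theta_apply_self_nonneg (hrow i)
    (by rcases hΘ i i with h | h <;> omega)

lemma IsZeroOne.of_iterate_theta {κ : ℕ} {B : Matrix (Fin (κ ^ 2 + 1)) (Fin (κ ^ 2 + 1)) ℤ}
    (hB : HasLineSums B κ) {t : ℕ} (ht : IsZeroOne ((Theta (κ ^ 2 + 1) κ)^[t] B)) :
    IsZeroOne B := by
  induction t generalizing B with
  | zero => exact ht
  | succ t ih => exact IsZeroOne.of_theta hB.1 (ih hB.theta ht)

lemma j2Free_of_theta_nonneg {A : Matrix (Fin n) (Fin n) ℤ} (hA : ∀ i j, 0 ≤ A i j)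
    (hΘ : ∀ i l, i ≠ l → 0 ≤ Theta n κ A i l) : J2Free A := by
  rintro ⟨i, l, j, k, hil, hjk, hij, hik, hlj, hlk⟩
  have hcommon : ∑ s ∈ {j, k}, A i s * A l s ≤ ∑ s, A i s * A l s :=
    Finset.sum_le_sum_of_subset_of_nonneg (Finset.subset_univ _)
      fun s _ _ => mul_nonneg (hA i s) (hA l s)
  have hoff := hΘ i l hil
  rw [theta_apply_of_ne A hil] at hoff
  rw [Finset.sum_pair hjk, hij, hik, hlj, hlk] at hcommon
  linarith

end

theorem stmt_6_general (κ : ℕ)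
    (A : Matrix (Fin (κ ^ 2 + 1)) (Fin (κ ^ 2 + 1)) ℤ)
    (h01 : ∀ i j, A i j = 0 ∨ A i j = 1)
    (hrow : ∀ i, ∑ j, A i j = (κ : ℤ)) (hcol : ∀ j, ∑ i, A i j = (κ : ℤ))
    (m : ℕ) (hm : 0 < m) (hfix : (Theta (κ ^ 2 + 1) (κ : ℤ))^[m] A = A) :
    J2Free A := by
  have hΘA : IsZeroOne (Theta (κ ^ 2 + 1) κ A) := by
    obtain ⟨t, rfl⟩ := Nat.exists_eq_add_one_of_ne_zero hm.ne'
    refine IsZeroOne.of_iterate_theta (t := t) (HasLineSums.theta ⟨hrow, hcol⟩) ?_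
    rwa [← Function.iterate_succ_apply, hfix]
  refine j2Free_of_theta_nonneg (κ := κ) (fun i j => ?_) (fun i l _ => ?_)
  · rcases h01 i j with h | h <;> omega
  · rcases hΘA i l with h | h <;> omega

theorem stmt_6 (κ : ℕ) (hκ : 0 < κ)
    (A : Matrix (Fin (κ ^ 2 + 1)) (Fin (κ ^ 2 + 1)) ℤ)
    (h01 : ∀ i j, A i j = 0 ∨ A i j = 1)
    (hrow : ∀ i, ∑ j, A i j = (κ : ℤ)) (hcol : ∀ j, ∑ i, A i j = (κ : ℤ))
    (m : ℕ) (hm : 0 < m) (hfix : (Theta (κ ^ 2 + 1) (κ : ℤ))^[m] A = A) :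
    J2Free A :=
  stmt_6_general κ A h01 hrow hcol m hm hfix
end

section
/- Let κ be a positive integer, let n = κ² + 1, and let A be an n×n (0,1)-matrix all of whose row sums and column sums equal κ. If Θ_κ^m(A) = A for some positive integer m, then A is symmetric and all entries on the main diagonal of A are 0. -/
/-!
Write `A = Θ(C)` with `C = Θ^{m-1}(A)`. Every `Θ(X)` is symmetric, which gives the first claim.
Because `n = κ² + 1`, the map `Θ` preserves "all row and column sums equal `κ`", so the rows of `C`
sum to `κ`; since `x ≤ x²` on `ℤ`, the diagonal entry `Θ(C)ᵢᵢ = κ - ∑ₖ Cᵢₖ²` is then at most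
`κ - ∑ₖ Cᵢₖ = 0`, and a `(0,1)`-entry that is `≤ 0` is `0`.
-/

open Matrix BigOperators

section Theta

variable {n : ℕ} {κ : ℤ}

lemma Theta_apply (A : Matrix (Fin n) (Fin n) ℤ) (i j : Fin n) :
    Theta n κ A i j = (κ - 1) * (if i = j then 1 else 0) + 1 - ∑ k, A i k * A j k := by
  simp only [Theta, Matrix.sub_apply, Matrix.add_apply, Matrix.smul_apply, one_apply, smul_eq_mul,
    of_apply, mul_apply, transpose_apply]

lemma Theta_isSymm (A : Matrix (Fin n) (Fin n) ℤ) : (Theta n κ A).IsSymm :=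
  ((isSymm_one.smul _).add (IsSymm.ext fun _ _ => rfl)).sub (isSymm_mul_transpose_self A)

lemma sum_Theta_apply_of_lineSums (hn : (n : ℤ) = κ ^ 2 + 1) {X : Matrix (Fin n) (Fin n) ℤ}
    (hrow : ∀ i, ∑ j, X i j = κ) (hcol : ∀ j, ∑ i, X i j = κ) (i : Fin n) :
    ∑ j, Theta n κ X i j = κ := by
  have hXXt : ∑ j, ∑ k, X i k * X j k = κ * κ := by
    simp only [Finset.sum_comm (γ := Fin n), ← Finset.mul_sum, hcol, ← Finset.sum_mul, hrow]
  simp only [Theta_apply, Finset.sum_sub_distrib, Finset.sum_add_distrib, ← Finset.mul_sum,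
    Finset.sum_ite_eq, Finset.mem_univ, if_true, Finset.sum_const, Finset.card_univ,
    Fintype.card_fin, nsmul_eq_mul, mul_one, hXXt, hn]
  ring

lemma iterate_Theta_lineSums (hn : (n : ℤ) = κ ^ 2 + 1) {X : Matrix (Fin n) (Fin n) ℤ}
    (hrow : ∀ i, ∑ j, X i j = κ) (hcol : ∀ j, ∑ i, X i j = κ) (k : ℕ) :
    (∀ i, ∑ j, (Theta n κ)^[k] X i j = κ) ∧ (∀ j, ∑ i, (Theta n κ)^[k] X i j = κ) := by
  induction k with
  | zero => exact ⟨hrow, hcol⟩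
  | succ k ih =>
    rw [Function.iterate_succ_apply']
    have hrow' := sum_Theta_apply_of_lineSums hn ih.1 ih.2
    exact ⟨hrow', fun j => by simpa only [(Theta_isSymm _).apply] using hrow' j⟩

lemma Theta_apply_self_nonpos {C : Matrix (Fin n) (Fin n) ℤ} {i : Fin n}
    (hrow : ∑ j, C i j = κ) : Theta n κ C i i ≤ 0 := by
  have hsq : ∑ j, C i j ≤ ∑ j, C i j * C i j :=
    Finset.sum_le_sum fun j _ => (Int.le_self_sq _).trans_eq (sq _)
  rw [Theta_apply, if_pos rfl]
  linarith

end Theta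

theorem stmt_7_general (κ : ℕ)
    (A : Matrix (Fin (κ ^ 2 + 1)) (Fin (κ ^ 2 + 1)) ℤ)
    (h01 : ∀ i j, A i j = 0 ∨ A i j = 1)
    (hrow : ∀ i, ∑ j, A i j = (κ : ℤ)) (hcol : ∀ j, ∑ i, A i j = (κ : ℤ))
    (m : ℕ) (hm : 0 < m) (hfix : (Theta (κ ^ 2 + 1) (κ : ℤ))^[m] A = A) :
    A.IsSymm ∧ ∀ i, A i i = 0 := by
  obtain ⟨m, rfl⟩ := Nat.exists_eq_add_one_of_ne_zero hm.ne'
  have hA : A = Theta _ κ ((Theta _ κ)^[m] A) := by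
    rw [← Function.iterate_succ_apply' (Theta _ κ), hfix]
  have hC := iterate_Theta_lineSums (by push_cast; ring) hrow hcol m
  refine ⟨hA ▸ Theta_isSymm _, fun i => ?_⟩
  have hle : A i i ≤ 0 := hA ▸ Theta_apply_self_nonpos (hC.1 i)
  rcases h01 i i with h | h
  · exact h
  · omega

theorem stmt_7 (κ : ℕ) (hκ : 0 < κ)
    (A : Matrix (Fin (κ ^ 2 + 1)) (Fin (κ ^ 2 + 1)) ℤ)
    (h01 : ∀ i j, A i j = 0 ∨ A i j = 1)
    (hrow : ∀ i, ∑ j, A i j = (κ : ℤ)) (hcol : ∀ j, ∑ i, A i j = (κ : ℤ))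
    (m : ℕ) (hm : 0 < m) (hfix : (Theta (κ ^ 2 + 1) (κ : ℤ))^[m] A = A) :
    A.IsSymm ∧ ∀ i, A i i = 0 :=
  stmt_7_general κ A h01 hrow hcol m hm hfix
end

section
/- Let n be a positive integer, κ an integer, and let C be an n×n J₂-free (0,1)-matrix all of whose row sums and column sums equal κ. Then Θ_κ(C) is a symmetric (0,1)-matrix with all diagonal entries 0 and all row and column sums equal to n − κ² + κ − 1; moreover, for all indices i ≠ j, the (i,j)-entry of Θ_κ(C) equals 1 if and only if there is no index k with C_{ik} = C_{jk} = 1. -/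
open Matrix BigOperators

/-!
For a (0,1)-matrix `C`, the entry `(C Cᵀ)ᵢⱼ` counts the columns in which rows `i` and `j` both
have a `1`. On the diagonal this is the row sum `κ`, which cancels against `(κ - 1) + 1`; off the
diagonal `J₂`-freeness bounds it by `1`, so `Θ_κ(C)ᵢⱼ = 1 - (C Cᵀ)ᵢⱼ ∈ {0, 1}`. Every row of
`C Cᵀ` sums to `κ²` because both the row and the column sums of `C` are `κ`.
-/

open Finset

namespace Matrix

variable {m ι R : Type*} [Fintype ι] [CommSemiring R]

theorem sum_mul_transpose_row_eq_mul [Fintype m] {A : Matrix m ι R} {ρ γ : R}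
    (hrow : ∀ i, ∑ k, A i k = ρ) (hcol : ∀ k, ∑ j, A j k = γ) (i : m) :
    ∑ j, (A * Aᵀ) i j = ρ * γ := by
  simp_rw [mul_apply, transpose_apply]
  rw [Finset.sum_comm]
  simp_rw [← Finset.mul_sum, hcol, ← Finset.sum_mul, hrow]

theorem mul_transpose_apply_of_zero_or_one [DecidableEq R] {A : Matrix m ι R}
    (h01 : ∀ i k, A i k = 0 ∨ A i k = 1) (i j : m) : (A * Aᵀ) i j = #{k | A i k = 1 ∧ A j k = 1} := by
  rw [mul_apply, ← Finset.sum_boole]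
  refine Finset.sum_congr rfl fun k _ => ?_
  rcases h01 i k with h | h <;> rcases h01 j k with h' | h' <;> simp [h, h']

theorem mul_transpose_apply_self_of_zero_or_one {A : Matrix m ι R}
    (h01 : ∀ i k, A i k = 0 ∨ A i k = 1) (i : m) : (A * Aᵀ) i i = ∑ k, A i k := by
  refine Finset.sum_congr rfl fun k _ => ?_
  rcases h01 i k with h | h <;> simp [h]

end Matrix

theorem J2Free.card_common_le_one {n : ℕ} {C : Matrix (Fin n) (Fin n) ℤ} (hJ2 : J2Free C)
    {i j : Fin n} (hij : i ≠ j) : #{k | C i k = 1 ∧ C j k = 1} ≤ 1 := by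
  refine Finset.card_le_one.mpr fun a ha b hb => ?_
  simp only [Finset.mem_filter] at ha hb
  by_contra hab
  exact hJ2 ⟨i, j, a, b, hij, hab, ha.2.1, hb.2.1, ha.2.2, hb.2.2⟩

namespace Theta

variable {n : ℕ} {κ : ℤ} {C : Matrix (Fin n) (Fin n) ℤ}

theorem apply (n : ℕ) (κ : ℤ) (A : Matrix (Fin n) (Fin n) ℤ) (i j : Fin n) :
    Theta n κ A i j = (κ - 1) * (1 : Matrix (Fin n) (Fin n) ℤ) i j + 1 - (A * Aᵀ) i j := by
  simp only [Theta, Matrix.sub_apply, Matrix.add_apply, Matrix.smul_apply, of_apply, smul_eq_mul]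

theorem isSymm (n : ℕ) (κ : ℤ) (A : Matrix (Fin n) (Fin n) ℤ) : (Theta n κ A).IsSymm :=
  ((isSymm_one.smul _).add (IsSymm.ext fun _ _ => rfl)).sub (isSymm_mul_transpose_self A)

theorem apply_of_ne {i j : Fin n} (hij : i ≠ j) (h01 : ∀ i k, C i k = 0 ∨ C i k = 1) :
    Theta n κ C i j = 1 - #{k | C i k = 1 ∧ C j k = 1} := by
  rw [Theta.apply, one_apply_ne hij, mul_transpose_apply_of_zero_or_one h01]
  ring

theorem apply_self (h01 : ∀ i k, C i k = 0 ∨ C i k = 1) (hrow : ∀ i, ∑ k, C i k = κ) (i : Fin n) :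
    Theta n κ C i i = 0 := by
  rw [Theta.apply, one_apply_eq, mul_transpose_apply_self_of_zero_or_one h01, hrow]
  ring

theorem sum_row (hrow : ∀ i, ∑ k, C i k = κ) (hcol : ∀ k, ∑ j, C j k = κ) (i : Fin n) :
    ∑ j, Theta n κ C i j = (n : ℤ) - κ ^ 2 + κ - 1 := by
  simp only [Theta.apply, Finset.sum_sub_distrib, Finset.sum_add_distrib, ← Finset.mul_sum,
    sum_mul_transpose_row_eq_mul hrow hcol, one_apply, sum_ite_eq, mem_univ, ↓reduceIte,
    sum_const, card_univ, Fintype.card_fin, nsmul_eq_mul]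
  ring

end Theta

theorem stmt_8_general (n : ℕ) (κ : ℤ) (C : Matrix (Fin n) (Fin n) ℤ)
    (h01 : ∀ i j, C i j = 0 ∨ C i j = 1) (hJ2 : J2Free C)
    (hrow : ∀ i, ∑ j, C i j = κ) (hcol : ∀ j, ∑ i, C i j = κ) :
    (Theta n κ C).IsSymm ∧
    (∀ i j, Theta n κ C i j = 0 ∨ Theta n κ C i j = 1) ∧
    (∀ i, Theta n κ C i i = 0) ∧
    (∀ i, ∑ j, Theta n κ C i j = (n : ℤ) - κ ^ 2 + κ - 1) ∧
    (∀ j, ∑ i, Theta n κ C i j = (n : ℤ) - κ ^ 2 + κ - 1) ∧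
    (∀ i j, i ≠ j → (Theta n κ C i j = 1 ↔ ¬ ∃ k, C i k = 1 ∧ C j k = 1)) := by
  have hsym := Theta.isSymm n κ C
  refine ⟨hsym, fun i j => ?_, Theta.apply_self h01 hrow, Theta.sum_row hrow hcol,
    fun j => ?_, fun i j hij => ?_⟩
  · rcases eq_or_ne i j with rfl | hij
    · exact .inl (Theta.apply_self h01 hrow i)
    · have := hJ2.card_common_le_one hij
      rw [Theta.apply_of_ne hij h01]
      omega
  · simpa only [hsym.apply] using Theta.sum_row hrow hcol j
  · simp [Theta.apply_of_ne hij h01, Finset.filter_eq_empty_iff]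

theorem stmt_8 (n : ℕ) (hn : 0 < n) (κ : ℤ) (C : Matrix (Fin n) (Fin n) ℤ)
    (h01 : ∀ i j, C i j = 0 ∨ C i j = 1) (hJ2 : J2Free C)
    (hrow : ∀ i, ∑ j, C i j = κ) (hcol : ∀ j, ∑ i, C i j = κ) :
    (Theta n κ C).IsSymm ∧
    (∀ i j, Theta n κ C i j = 0 ∨ Theta n κ C i j = 1) ∧
    (∀ i, Theta n κ C i i = 0) ∧
    (∀ i, ∑ j, Theta n κ C i j = (n : ℤ) - κ ^ 2 + κ - 1) ∧
    (∀ j, ∑ i, Theta n κ C i j = (n : ℤ) - κ ^ 2 + κ - 1) ∧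
    (∀ i j, i ≠ j → (Theta n κ C i j = 1 ↔ ¬ ∃ k, C i k = 1 ∧ C j k = 1)) :=
  stmt_8_general n κ C h01 hJ2 hrow hcol
end

section
/- Let κ be a positive integer and let G be a κ-regular simple graph on κ² + 1 vertices containing no cycle of length 4. Then a vertex v of G lies in no 3-cycle (triangle) of G if and only if v is a centre of G with radius 2, i.e. every vertex w of G satisfies dist_G(v, w) ≤ 2. -/
/-!
Within distance two of `v` lie `v` itself and, for each neighbour `a` of `v`, the set
`branch v a` of `a` and its neighbours other than `v`, which has `κ` elements. So the 2-ball
around `v` has at most `κ ^ 2 + 1 = |V|` vertices, with equality iff the `κ` branches are pairwise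
disjoint. Branches of distinct neighbours `a`, `b` can only meet in a common neighbour `w ≠ v`,
which would close the 4-cycle `v a w b`, or in `a` or `b` themselves, i.e. when `v a b` is a
triangle.
-/

open Finset

theorem Finset.card_biUnion_eq_sum_card_iff {ι M : Type*} [DecidableEq ι] [DecidableEq M]
    {s : Finset ι} {t : ι → Finset M} :
    #(s.biUnion t) = ∑ i ∈ s, #(t i) ↔ (s : Set ι).PairwiseDisjoint t := by
  induction s using Finset.induction_on with
  | empty => simp
  | insert a s has ih =>
    have hle : #(s.biUnion t) ≤ ∑ i ∈ s, #(t i) := card_biUnion_le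
    rw [biUnion_insert, sum_insert has, coe_insert, Set.pairwiseDisjoint_insert_of_notMem has,
      ← ih]
    simp only [mem_coe]
    rw [← disjoint_biUnion_right, ← card_union_eq_card_add_card]
    have := card_union_le (t a) (s.biUnion t)
    omega

namespace SimpleGraph

variable {V : Type*} (G : SimpleGraph V) [DecidableEq V] [G.LocallyFinite]

def branch (v a : V) : Finset V := insert a ((G.neighborFinset a).erase v)

def ballTwo (v : V) : Finset V := insert v ((G.neighborFinset v).biUnion (G.branch v))

variable {G}

theorem mem_branch {v a w : V} : w ∈ G.branch v a ↔ w = a ∨ G.Adj a w ∧ w ≠ v := by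
  simp [branch, and_comm]

theorem card_branch {v a : V} (h : G.Adj v a) : #(G.branch v a) = G.degree a := by
  have hpos : 0 < G.degree a := G.degree_pos_iff_exists_adj a |>.mpr ⟨v, h.symm⟩
  rw [branch, card_insert_of_notMem (by simp), card_erase_of_mem (by simpa using h.symm),
    card_neighborFinset_eq_degree]
  omega

theorem notMem_branch {v a : V} (h : G.Adj v a) : v ∉ G.branch v a := by
  simp [mem_branch, h.ne]

theorem mem_ballTwo_iff {v w : V} : w ∈ G.ballTwo v ↔ ∃ p : G.Walk v w, p.length ≤ 2 := by
  simp only [ballTwo, mem_insert, mem_biUnion, mem_neighborFinset, mem_branch]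
  constructor
  · rintro (rfl | ⟨a, hva, rfl | ⟨haw, -⟩⟩)
    · exact ⟨.nil, by simp⟩
    · exact ⟨hva.toWalk, by simp⟩
    · exact ⟨.cons hva haw.toWalk, by simp⟩
  · rintro ⟨p, hp⟩
    match p, hp with
    | .nil, _ => exact .inl rfl
    | .cons hva .nil, _ => exact .inr ⟨_, hva, .inl rfl⟩
    | .cons hva (.cons haw .nil), _ =>
      by_cases hwv : w = v
      · exact .inl hwv
      · exact .inr ⟨_, hva, .inr ⟨haw, hwv⟩⟩
    | .cons _ (.cons _ (.cons _ _)), hp => simp at hp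

theorem card_ballTwo_eq_iff {k : ℕ} (hreg : G.IsRegularOfDegree k) (v : V) :
    #(G.ballTwo v) = k ^ 2 + 1 ↔
      (G.neighborFinset v : Set V).PairwiseDisjoint (G.branch v) := by
  have hv : v ∉ (G.neighborFinset v).biUnion (G.branch v) := by
    simp only [mem_biUnion, mem_neighborFinset, not_exists, not_and]
    exact fun a h => notMem_branch h
  have hsum : ∑ a ∈ G.neighborFinset v, #(G.branch v a) = k ^ 2 := by
    rw [sum_const_nat fun a ha => (card_branch ((G.mem_neighborFinset v a).mp ha)).trans (hreg a),
      card_neighborFinset_eq_degree, hreg v, sq]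
  rw [ballTwo, card_insert_of_notMem hv, add_left_inj, ← hsum, card_biUnion_eq_sum_card_iff]

theorem pairwiseDisjoint_branch_iff {v : V}
    (hC4free : ∀ w : V, v ≠ w → ∀ a b : V, a ≠ b →
      G.Adj v a → G.Adj v b → G.Adj w a → G.Adj w b → False) :
    (G.neighborFinset v : Set V).PairwiseDisjoint (G.branch v) ↔
      ¬ ∃ a b : V, G.Adj v a ∧ G.Adj v b ∧ G.Adj a b := by
  simp only [Set.PairwiseDisjoint, Set.Pairwise, mem_coe, mem_neighborFinset, Function.onFun,
    Finset.disjoint_left, mem_branch]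
  constructor
  · rintro hdisj ⟨a, b, hva, hvb, hab⟩
    exact hdisj hva hvb hab.ne (.inr ⟨hab, hvb.ne.symm⟩) (.inl rfl)
  · rintro hno a hva b hvb hab w (rfl | ⟨haw, hwv⟩) (rfl | ⟨hbw, -⟩)
    · exact hab rfl
    · exact hno ⟨w, b, hva, hvb, hbw.symm⟩
    · exact hno ⟨a, w, hva, hvb, haw⟩
    · exact hC4free w (Ne.symm hwv) a b hab hva hvb haw.symm hbw.symm

end SimpleGraph

open Matrix BigOperators

theorem stmt_11_general (κ : ℕ) (V : Type*) [Fintype V]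
    (hcard : Fintype.card V = κ ^ 2 + 1)
    (G : SimpleGraph V) [DecidableRel G.Adj]
    (hreg : G.IsRegularOfDegree κ)
    (hC4free : ∀ v w : V, v ≠ w → ∀ a b : V, a ≠ b →
      G.Adj v a → G.Adj v b → G.Adj w a → G.Adj w b → False)
    (v : V) :
    (¬ ∃ a b : V, G.Adj v a ∧ G.Adj v b ∧ G.Adj a b) ↔
      (∀ w : V, ∃ p : G.Walk v w, p.length ≤ 2) := by
  classical
  rw [← G.pairwiseDisjoint_branch_iff (hC4free v), ← G.card_ballTwo_eq_iff hreg, ← hcard,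
    card_eq_iff_eq_univ, eq_univ_iff_forall]
  simp only [SimpleGraph.mem_ballTwo_iff]

theorem stmt_11 (κ : ℕ) (hκ : 0 < κ) (V : Type*) [Fintype V] [DecidableEq V]
    (hcard : Fintype.card V = κ ^ 2 + 1)
    (G : SimpleGraph V) [DecidableRel G.Adj]
    (hreg : G.IsRegularOfDegree κ)
    (hC4free : ∀ v w : V, v ≠ w → ∀ a b : V, a ≠ b →
      G.Adj v a → G.Adj v b → G.Adj w a → G.Adj w b → False)
    (v : V) :
    (¬ ∃ a b : V, G.Adj v a ∧ G.Adj v b ∧ G.Adj a b) ↔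
      (∀ w : V, ∃ p : G.Walk v w, p.length ≤ 2) :=
  stmt_11_general κ V hcard G hreg hC4free v
end

section
/- Let κ ≥ 2 be an integer and let G be a κ-regular simple graph on κ² + 1 vertices containing no cycle of length 4. Then G is connected and its diameter satisfies diam(G) ≤ 3. Moreover, diam(G) = 2 if and only if G has girth 5. -/
/-!
Fix `v` with neighbourhood `N`. By C4-freeness the sets `N(x) \ {v}`, `x ∈ N`, are pairwise
disjoint, so the ball of radius 2 about `v` has exactly `κ² + 1 - t(v)` vertices, where
`t(v) ≤ κ` counts the neighbours of `v` on a triangle through `v`. Hence at most `κ` vertices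
lie at distance `> 2` from `v`, and some vertex of the closed neighbourhood of any `u` (which
has `κ + 1` vertices) is within distance 2 of `v`: so `d(v, u) ≤ 3`. Diameter 2 thus means
`t ≡ 0`, i.e. no triangles, which with C4-freeness gives girth at least 5; and a graph of
diameter 2 and minimum degree 2 contains a cycle of length at most 5. Diameter at least 2 holds
because `G` is not complete.
-/

open Finset

namespace SimpleGraph

variable {V : Type*} {G : SimpleGraph V}

def IsC4Free (G : SimpleGraph V) : Prop :=
  ∀ v w : V, v ≠ w → ∀ a b : V, a ≠ b →
    G.Adj v a → G.Adj v b → G.Adj w a → G.Adj w b → False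

lemma edist_le_two_iff {u v : V} :
    G.edist u v ≤ 2 ↔ u = v ∨ G.Adj u v ∨ ∃ x, G.Adj u x ∧ G.Adj x v := by
  rw [← not_lt, two_lt_edist_iff, Set.eq_empty_iff_forall_notMem]
  simp only [mem_commonNeighbors, G.adj_comm v]
  grind

lemma two_le_edist {u v : V} (huv : u ≠ v) (h : ¬ G.Adj u v) : 2 ≤ G.edist u v := by
  have : 1 < G.edist u v := by
    rw [← not_le, edist_le_one_iff_adj_or_eq]
    tauto
  exact Order.add_one_le_of_lt this

lemma cliqueFree_three_iff_three_lt_egirth : G.CliqueFree 3 ↔ 3 < G.egirth := by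
  rw [← not_iff_not, not_cliqueFree_iff_top_isContained, not_lt]
  change (⊤ : SimpleGraph (Fin 3)) ⊑ G ↔ _
  rw [← cycleGraph_three_eq_top, cycleGraph_isContained_iff (by norm_num)]
  constructor
  · rintro ⟨a, w, hw, hlen⟩
    simpa [hlen] using egirth_le_length hw
  · intro h
    have hacyc : ¬ G.IsAcyclic := fun hG => by simp [hG.egirth_eq_top] at h
    obtain ⟨a, w, hw, hlen⟩ := exists_egirth_eq_length.mpr hacyc
    exact ⟨a, w, hw, by exact_mod_cast hlen ▸ le_antisymm h G.three_le_egirth⟩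

lemma egirth_le_three_of_adj {a b c : V} (hab : G.Adj a b) (hac : G.Adj a c) (hbc : G.Adj b c) :
    G.egirth ≤ 3 := by
  classical
  have : ¬ G.CliqueFree 3 := fun h => h {a, b, c} (is3Clique_triple_iff.mpr ⟨hab, hac, hbc⟩)
  rwa [cliqueFree_three_iff_three_lt_egirth, not_lt] at this

lemma egirth_le_four_of_adj {a b c d : V} (hab : G.Adj a b) (hbc : G.Adj b c) (hcd : G.Adj c d)
    (hda : G.Adj d a) (hac : a ≠ c) (hbd : b ≠ d) : G.egirth ≤ 4 := by
  refine (egirth_le_length (w := .cons hab (.cons hbc (.cons hcd (.cons hda .nil))))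
    ?_).trans (by simp)
  rw [Walk.cons_isCycle_iff]
  simp [hab.ne, hbc.ne, hcd.ne, hda.ne, hab.ne.symm, hac, hbd, hac.symm]

lemma egirth_le_five_of_adj {a b c d e : V} (hab : G.Adj a b) (hbc : G.Adj b c)
    (hcd : G.Adj c d) (hde : G.Adj d e) (hea : G.Adj e a) (hac : a ≠ c) (had : a ≠ d)
    (hbd : b ≠ d) (hbe : b ≠ e) (hce : c ≠ e) : G.egirth ≤ 5 := by
  refine (egirth_le_length (w := .cons hab (.cons hbc (.cons hcd (.cons hde (.cons hea .nil)))))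
    ?_).trans (by simp)
  rw [Walk.cons_isCycle_iff]
  simp [hab.ne, hbc.ne, hcd.ne, hde.ne, hea.ne, hab.ne.symm, hea.ne.symm, hac, had, hbd, hbe,
    hce, hac.symm, had.symm]

lemma IsC4Free.not_cycleGraph_four_isContained (hG : G.IsC4Free) : ¬ cycleGraph 4 ⊑ G := by
  rintro ⟨f⟩
  exact hG (f 0) (f 2) (f.injective.ne (by decide)) (f 1) (f 3) (f.injective.ne (by decide))
    (f.toHom.map_adj (by decide)) (f.toHom.map_adj (by decide)) (f.toHom.map_adj (by decide))
    (f.toHom.map_adj (by decide))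

lemma IsC4Free.five_le_egirth (hG : G.IsC4Free) (h3 : G.CliqueFree 3) : 5 ≤ G.egirth := by
  rw [le_egirth]
  intro a w hw
  have hlen3 : 3 < w.length := by
    exact_mod_cast (cliqueFree_three_iff_three_lt_egirth.mp h3).trans_le (egirth_le_length hw)
  have hlen4 : w.length ≠ 4 := fun hlen => hG.not_cycleGraph_four_isContained
    ((cycleGraph_isContained_iff (by norm_num)).mpr ⟨a, w, hw, hlen⟩)
  exact_mod_cast (by omega : 5 ≤ w.length)

section Finite

variable [Fintype V] [DecidableRel G.Adj]

theorem egirth_le_five_of_ediam_le_two [Nonempty V] (hdeg : 2 ≤ G.minDegree)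
    (hdiam : G.ediam ≤ 2) : G.egirth ≤ 5 := by
  have hdeg' (v : V) : 1 < #(G.neighborFinset v) := by
    rw [card_neighborFinset_eq_degree]
    exact hdeg.trans (G.minDegree_le_degree v)
  obtain ⟨v⟩ := ‹Nonempty V›
  obtain ⟨a, hva, -⟩ := exists_mem_ne (hdeg' v) v
  obtain ⟨b, hab, hbv⟩ := exists_mem_ne (hdeg' a) v
  obtain ⟨c, hbc, hca⟩ := exists_mem_ne (hdeg' b) a
  rw [mem_neighborFinset] at hva hab hbc
  by_cases hvb : G.Adj v b
  · exact (egirth_le_three_of_adj hva hvb hab).trans (by norm_num)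
  by_cases hac : G.Adj a c
  · exact (egirth_le_three_of_adj hab hac hbc).trans (by norm_num)
  have hcv : c ≠ v := by rintro rfl; exact hvb hbc.symm
  by_cases hvc : G.Adj v c
  · exact (egirth_le_four_of_adj hva hab hbc hvc.symm hbv.symm hca.symm).trans (by norm_num)
  obtain ⟨x, hvx, hxc⟩ : ∃ x, G.Adj v x ∧ G.Adj x c := by
    have := edist_le_two_iff.mp (edist_le_ediam.trans hdiam : G.edist v c ≤ 2)
    tauto
  refine egirth_le_five_of_adj hva hab hbc hxc.symm hvx.symm hbv.symm hcv.symm hca.symm ?_ ?_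
  · rintro rfl; exact hac hxc
  · rintro rfl; exact hvb hvx

variable [DecidableEq V]

theorem IsC4Free.card_edist_le_two_add_card_triangle (hG : G.IsC4Free) (v : V) :
    #{u | G.edist v u ≤ 2} + #{x ∈ G.neighborFinset v | ∃ y, G.Adj v y ∧ G.Adj x y} =
      1 + ∑ x ∈ G.neighborFinset v, G.degree x := by
  set N := G.neighborFinset v
  set D := N.biUnion fun x => (G.neighborFinset x).erase v
  have hball : ({u | G.edist v u ≤ 2} : Finset V) = insert v (N ∪ D) := by
    ext u
    simp only [mem_filter_univ, edist_le_two_iff, mem_insert, mem_union, N, D, mem_biUnion,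
      mem_erase, mem_neighborFinset]
    grind [SimpleGraph.irrefl]
  have htri : N ∩ D = {x ∈ N | ∃ y, G.Adj v y ∧ G.Adj x y} := by
    ext x
    simp only [mem_inter, mem_filter, N, D, mem_biUnion, mem_erase, mem_neighborFinset]
    grind [SimpleGraph.irrefl, SimpleGraph.adj_symm]
  have hD : #D = ∑ x ∈ N, (G.degree x - 1) := by
    rw [card_biUnion]
    · refine sum_congr rfl fun x hx => ?_
      rw [card_erase_of_mem (by simpa [N, G.adj_comm] using hx), card_neighborFinset_eq_degree]
    · intro x hx y hy hxy
      simp only [Function.onFun, Finset.disjoint_left, mem_erase, mem_neighborFinset, not_and]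
      intro u ⟨huv, hxu⟩ _ hyu
      exact hG v u huv.symm x y hxy (by simpa [N] using hx) (by simpa [N] using hy) hxu.symm
        hyu.symm
  have hvND : v ∉ N ∪ D := by simp [N, D]
  rw [hball, card_insert_of_notMem hvND, ← htri, add_right_comm, card_union_add_card_inter, hD,
    add_comm, card_eq_sum_ones, ← sum_add_distrib]
  refine congrArg _ (sum_congr rfl fun x hx => ?_)
  have : 0 < G.degree x :=
    G.degree_pos_iff_exists_adj x |>.mpr ⟨v, by simpa [N, G.adj_comm] using hx⟩
  omega

variable {κ : ℕ}

lemma IsRegularOfDegree.card_insert_neighborFinset (hreg : G.IsRegularOfDegree κ) (v : V) :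
    #(insert v (G.neighborFinset v)) = κ + 1 := by
  rw [card_insert_of_notMem (by simp), card_neighborFinset_eq_degree, hreg v]

lemma IsRegularOfDegree.exists_ne_not_adj (hreg : G.IsRegularOfDegree κ)
    (hcard : κ + 1 < Fintype.card V) : ∃ u v, u ≠ v ∧ ¬ G.Adj u v := by
  obtain ⟨v⟩ : Nonempty V := Fintype.card_pos_iff.mp (by omega)
  obtain ⟨u, -, hu⟩ := exists_mem_notMem_of_card_lt_card (s := insert v (G.neighborFinset v))
    (t := univ) (by rwa [hreg.card_insert_neighborFinset, card_univ])
  simp only [mem_insert, mem_neighborFinset, not_or] at hu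
  exact ⟨v, u, Ne.symm hu.1, hu.2⟩

theorem IsC4Free.card_two_lt_edist_eq (hG : G.IsC4Free) (hreg : G.IsRegularOfDegree κ)
    (hcard : Fintype.card V = κ ^ 2 + 1) (v : V) :
    #{u | 2 < G.edist v u} = #{x ∈ G.neighborFinset v | ∃ y, G.Adj v y ∧ G.Adj x y} := by
  have hball := hG.card_edist_le_two_add_card_triangle v
  have hsplit := card_filter_add_card_filter_not (s := univ) (G.edist v · ≤ 2)
  simp only [not_le, card_univ, hcard] at hsplit
  rw [sum_congr rfl fun x _ => hreg x, sum_const, card_neighborFinset_eq_degree, hreg v,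
    smul_eq_mul] at hball
  rw [sq] at hsplit
  omega

theorem IsC4Free.card_two_lt_edist_le (hG : G.IsC4Free) (hreg : G.IsRegularOfDegree κ)
    (hcard : Fintype.card V = κ ^ 2 + 1) (v : V) : #{u | 2 < G.edist v u} ≤ κ := by
  rw [hG.card_two_lt_edist_eq hreg hcard, ← hreg v, ← card_neighborFinset_eq_degree]
  exact card_filter_le _ _

theorem IsC4Free.edist_le_three (hG : G.IsC4Free) (hreg : G.IsRegularOfDegree κ)
    (hcard : Fintype.card V = κ ^ 2 + 1) (v u : V) : G.edist v u ≤ 3 := by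
  obtain ⟨w, hw, hvw⟩ := exists_mem_notMem_of_card_lt_card (s := {u | 2 < G.edist v u})
    (t := insert u (G.neighborFinset u)) (by
      rw [hreg.card_insert_neighborFinset]
      exact Nat.lt_succ_of_le (hG.card_two_lt_edist_le hreg hcard v))
  have hwu : G.edist w u ≤ 1 := by
    rw [edist_le_one_iff_adj_or_eq]
    simp only [mem_insert, mem_neighborFinset] at hw
    rcases hw with rfl | h
    · exact .inr rfl
    · exact .inl h.symm
  simp only [mem_filter_univ, not_lt] at hvw
  calc G.edist v u ≤ G.edist v w + G.edist w u := G.edist_triangle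
    _ ≤ 2 + 1 := add_le_add hvw hwu
    _ = 3 := by norm_num

theorem IsC4Free.forall_edist_le_two_iff_cliqueFree (hG : G.IsC4Free)
    (hreg : G.IsRegularOfDegree κ) (hcard : Fintype.card V = κ ^ 2 + 1) :
    (∀ u v, G.edist u v ≤ 2) ↔ G.CliqueFree 3 := by
  have hfar (v : V) :
      (∀ u, G.edist v u ≤ 2) ↔ ∀ x y, G.Adj v x → G.Adj v y → ¬ G.Adj x y := by
    have h := congrArg (· = 0) (hG.card_two_lt_edist_eq hreg hcard v)
    simp only [card_eq_zero, filter_eq_empty_iff, mem_univ, mem_neighborFinset, not_lt,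
      true_imp_iff, not_exists, not_and, eq_iff_iff] at h
    rw [h]
    grind
  simp only [hfar, CliqueFree, is3Clique_iff, not_exists, not_and]
  grind

end Finite

end SimpleGraph

open SimpleGraph

theorem stmt_12 (κ : ℕ) (hκ : 2 ≤ κ) (V : Type*) [Fintype V] [DecidableEq V]
    (hcard : Fintype.card V = κ ^ 2 + 1)
    (G : SimpleGraph V) [DecidableRel G.Adj]
    (hreg : G.IsRegularOfDegree κ)
    (hC4free : ∀ v w : V, v ≠ w → ∀ a b : V, a ≠ b →
      G.Adj v a → G.Adj v b → G.Adj w a → G.Adj w b → False) :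
    G.Connected ∧ G.diam ≤ 3 ∧ (G.diam = 2 ↔ G.girth = 5) := by
  have hG : G.IsC4Free := hC4free
  have hV : Nonempty V := by rw [← Fintype.card_pos_iff, hcard]; positivity
  have hediam : G.ediam ≤ 3 := ediam_le_of_edist_le (hG.edist_le_three hreg hcard)
  have hball_iff := hG.forall_edist_le_two_iff_cliqueFree hreg hcard
  obtain ⟨u, v, huv, huv'⟩ := hreg.exists_ne_not_adj (by rw [hcard]; nlinarith)
  have hdiam2 : G.diam = 2 ↔ G.ediam ≤ 2 := by
    have h2 : 2 ≤ G.ediam := (two_le_edist huv huv').trans edist_le_ediam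
    rw [diam, ENat.toNat_eq_iff two_ne_zero]
    exact ⟨le_of_eq, fun h => le_antisymm h h2⟩
  have hgirth : G.girth = 5 ↔ G.CliqueFree 3 := by
    rw [girth, ENat.toNat_eq_iff (by norm_num)]
    refine ⟨fun h => cliqueFree_three_iff_three_lt_egirth.mpr (by rw [h]; norm_num),
      fun h3 => le_antisymm ?_ (hG.five_le_egirth h3)⟩
    exact egirth_le_five_of_ediam_le_two (hreg.minDegree_eq ▸ hκ)
      (ediam_le_iff.mpr (hball_iff.mpr h3))
  refine ⟨connected_of_ediam_ne_top (ne_top_of_le_ne_top (by decide) hediam),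
    ENat.toNat_le_toNat hediam (by decide), ?_⟩
  rw [hdiam2, hgirth, ediam_le_iff, hball_iff]
end

section
/- Let κ ≥ 2 be an integer, let n = κ² + 1, and let A be an n×n (0,1)-matrix all of whose row sums and column sums equal κ. If Θ_κ(A) = A, then κ ∈ {2, 3, 7, 57}. -/
/-!
Since `Θ_κ(A)` is symmetric, `A = Aᵀ`, and the diagonal of `Θ_κ(A) = A` forces `A` to have zero
diagonal; so `A² + A = (κ - 1) I + J`, `A J = κ J` and `tr A = 0`. With `n = κ² + 1`, the matrix
`N = n (2A + I) - (2κ + 1) J` annihilates `J` and satisfies `N³ = n² (4κ - 3) N`, so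
`Y = N / (n √(4κ - 3))` satisfies `Y³ = Y`. Then `Y²` and `(Y² + Y) / 2` are idempotent, and
idempotents have natural-number trace, so `tr Y` is an integer `d`; this reads
`d √(4κ - 3) = κ² - 2κ`. Unless `κ = 2`, `4κ - 3` is therefore a square `s²` with `s ∣ κ² - 2κ`,
and `16 (κ² - 2κ) = s⁴ - 2s² - 15` gives `s ∣ 15`, i.e. `κ ∈ {1, 3, 7, 57}`.
-/

open Matrix BigOperators

theorem Matrix.trace_eq_finrank_range_of_isIdempotentElem {K ι : Type*} [Field K] [Fintype ι]
    [DecidableEq ι] {E : Matrix ι ι K} (hE : IsIdempotentElem E) :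
    E.trace = Module.finrank K (LinearMap.range E.toLin') := by
  rw [← Matrix.trace_toLin'_eq]
  exact (LinearMap.IsIdempotentElem.isProj_range _ (hE.map toLinAlgEquiv')).trace

theorem Matrix.exists_int_trace_eq_of_mul_mul_self_eq {K ι : Type*} [Field K] [CharZero K]
    [Fintype ι] [DecidableEq ι] {Y : Matrix ι ι K} (hY : Y * Y * Y = Y) :
    ∃ d : ℤ, Y.trace = d := by
  have hY4 : Y * Y * Y * Y = Y * Y := by rw [hY]
  have hsq : IsIdempotentElem (Y * Y) := by
    rw [IsIdempotentElem, ← mul_assoc, hY4]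
  have hE : IsIdempotentElem ((2 : K)⁻¹ • (Y * Y + Y)) := by
    have : (Y * Y + Y) * (Y * Y + Y) = (2 : K) • (Y * Y + Y) := by
      simp only [add_mul, mul_add, ← mul_assoc, hY]
      module
    rw [IsIdempotentElem, smul_mul_smul, this, smul_smul]
    norm_num
  have hp := trace_eq_finrank_range_of_isIdempotentElem hsq
  have hq := trace_eq_finrank_range_of_isIdempotentElem hE
  rw [trace_smul, trace_add, smul_eq_mul] at hq
  refine ⟨2 * Module.finrank K (LinearMap.range ((2 : K)⁻¹ • (Y * Y + Y)).toLin')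
    - Module.finrank K (LinearMap.range (Y * Y).toLin'), ?_⟩
  push_cast
  linear_combination 2 * hq - hp

theorem Matrix.exists_int_mul_sqrt_eq_of_mul_self_add_self_eq {ι : Type*} [Fintype ι]
    [DecidableEq ι] [Nonempty ι]
    {A : Matrix ι ι ℝ} {k : ℝ} (hk : 3 < 4 * k)
    (hA : A * A + A = (k - 1) • 1 + of (fun _ _ => 1))
    (hAJ : A * of (fun _ _ => 1) = k • of (fun _ _ => 1)) :
    ∃ d : ℤ, d * √(4 * k - 3) = 2 * A.trace + Fintype.card ι - (2 * k + 1) := by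
  set J : Matrix ι ι ℝ := of fun _ _ => 1
  set n : ℝ := (Fintype.card ι : ℝ)
  have hn : n ≠ 0 := by positivity
  have hJJ : J * J = n • J := by ext; simp [J, mul_apply, n]
  have hJA : J * A = k • J := by
    have hJ : J = A * A + A - (k - 1) • 1 := by rw [hA]; abel
    have : Commute A J := by
      rw [hJ]
      exact (((Commute.refl A).mul_right (Commute.refl A)).add_right (Commute.refl A)).sub_right
        ((Commute.one_right A).smul_right _)
    rw [← this.eq, hAJ]
  have hAA : A * A = (k - 1) • 1 + J - A := by rw [← hA]; abel
  -- `N` kills the all-ones vector and acts as `n • (2 • A + 1)` on its orthogonal complement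
  obtain ⟨N, hN⟩ : ∃ N : Matrix ι ι ℝ, N = n • (2 • A + 1) - (2 * k + 1) • J := ⟨_, rfl⟩
  have hNJ : N * J = 0 := by
    simp only [hN, sub_mul, add_mul, smul_mul_assoc, hAJ, hJJ, one_mul]
    module
  have hNN : N * N = (n ^ 2 * (4 * k - 3)) • 1 + (4 * n ^ 2 - n * (2 * k + 1) ^ 2) • J := by
    simp only [hN, sub_mul, mul_sub, add_mul, mul_add, smul_mul_assoc, mul_smul_comm, hAA, hAJ,
      hJA, hJJ, one_mul, mul_one]
    module
  have hN3 : N * N * N = (n ^ 2 * (4 * k - 3)) • N := by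
    rw [mul_assoc, hNN, mul_add, mul_smul_comm, mul_smul_comm, hNJ, mul_one, smul_zero, add_zero]
  have htrN : N.trace = n * (2 * A.trace + n) - (2 * k + 1) * n := by
    have htrJ : J.trace = n := by simp [J, trace, n]
    rw [hN, trace_sub, trace_smul, trace_smul, trace_add, trace_smul, trace_one, htrJ]
    simp only [smul_eq_mul, nsmul_eq_mul, n]
    ring
  have hs : √(4 * k - 3) ^ 2 = 4 * k - 3 := Real.sq_sqrt (by linarith)
  have hs0 : √(4 * k - 3) ≠ 0 := by positivity
  obtain ⟨d, hd⟩ := exists_int_trace_eq_of_mul_mul_self_eq (Y := (n * √(4 * k - 3))⁻¹ • N) (by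
    rw [smul_mul_smul, smul_mul_smul, hN3, smul_smul]
    congr 1
    field_simp
    rw [hs])
  refine ⟨d, ?_⟩
  rw [← hd, trace_smul, htrN, smul_eq_mul]
  field_simp

theorem Matrix.mul_transpose_apply_self_of_zero_one {R m n : Type*} [Semiring R] [Fintype n]
    {A : Matrix m n R} (h01 : ∀ i j, A i j = 0 ∨ A i j = 1) (i : m) :
    (A * Aᵀ) i i = ∑ j, A i j := by
  rw [mul_apply]
  refine Finset.sum_congr rfl fun j _ => ?_
  rcases h01 i j with h | h <;> simp [h]

section Theta

variable {n : ℕ} {κ : ℤ} {A : Matrix (Fin n) (Fin n) ℤ}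

theorem Theta_transpose : (Theta n κ A)ᵀ = Theta n κ A := by
  have hJ : (of fun _ _ => (1 : ℤ) : Matrix (Fin n) (Fin n) ℤ)ᵀ = of fun _ _ => 1 := rfl
  rw [Theta, transpose_sub, transpose_add, transpose_smul, transpose_one, hJ, transpose_mul,
    transpose_transpose]

theorem transpose_eq_self_of_Theta_eq (h : Theta n κ A = A) : Aᵀ = A := by
  rw [← h, Theta_transpose]

theorem diag_eq_zero_of_Theta_eq (h01 : ∀ i j, A i j = 0 ∨ A i j = 1)
    (hrow : ∀ i, ∑ j, A i j = κ) (h : Theta n κ A = A) (i : Fin n) : A i i = 0 := by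
  have hii := congrFun (congrFun h i) i
  simp only [Theta, Matrix.sub_apply, Matrix.add_apply, Matrix.smul_apply, one_apply_eq, of_apply,
    smul_eq_mul, mul_transpose_apply_self_of_zero_one h01, hrow] at hii
  linarith

theorem mul_self_add_self_of_Theta_eq (h : Theta n κ A = A) :
    A * A + A = (κ - 1) • 1 + of (fun _ _ => 1) := by
  have h' := h
  rw [Theta, transpose_eq_self_of_Theta_eq h, sub_eq_iff_eq_add'] at h'
  exact h'.symm

end Theta

theorem Int.eq_of_sq_mul_four_mul_sub_three_eq {k d : ℤ}
    (h : d ^ 2 * (4 * k - 3) = (k ^ 2 - 2 * k) ^ 2) :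
    k = 0 ∨ k = 1 ∨ k = 2 ∨ k = 3 ∨ k = 7 ∨ k = 57 := by
  by_cases hc : k ^ 2 - 2 * k = 0
  · have : k * (k - 2) = 0 := by linear_combination hc
    rcases mul_eq_zero.mp this with h0 | h2
    · exact Or.inl h0
    · exact Or.inr (Or.inr (Or.inl (by linarith)))
  have hd : d ≠ 0 := by
    rintro rfl
    exact hc (pow_eq_zero_iff two_ne_zero |>.1 (by simpa using h.symm))
  obtain ⟨s, hs⟩ : d ∣ k ^ 2 - 2 * k := (Int.pow_dvd_pow_iff two_ne_zero).mp ⟨_, h.symm⟩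
  have hs2 : s ^ 2 = 4 * k - 3 := by
    have : d ^ 2 * (4 * k - 3) = d ^ 2 * s ^ 2 := by rw [h, hs]; ring
    exact (mul_left_cancel₀ (pow_ne_zero 2 hd) this).symm
  have h15 : s ∣ 15 := ⟨s ^ 3 - 2 * s - 16 * d, by
    linear_combination -(s ^ 2 + 4 * k - 5) * hs2 - 16 * hs⟩
  have hm : s.natAbs ∈ Nat.divisors 15 :=
    Nat.mem_divisors.2 ⟨Int.natAbs_dvd_natAbs.2 h15, by norm_num⟩
  have hsq : (s.natAbs : ℤ) ^ 2 = 4 * k - 3 := by rw [Int.natAbs_sq, hs2]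
  rw [show Nat.divisors 15 = {1, 3, 5, 15} from rfl] at hm
  simp only [Finset.mem_insert, Finset.mem_singleton] at hm
  rcases hm with hm | hm | hm | hm <;> rw [hm] at hsq <;> omega

theorem stmt_13_general (κ : ℕ) (hκ : 2 ≤ κ)
    (A : Matrix (Fin (κ ^ 2 + 1)) (Fin (κ ^ 2 + 1)) ℤ)
    (h01 : ∀ i j, A i j = 0 ∨ A i j = 1)
    (hrow : ∀ i, ∑ j, A i j = (κ : ℤ))
    (hfix : Theta (κ ^ 2 + 1) (κ : ℤ) A = A) :
    κ = 2 ∨ κ = 3 ∨ κ = 7 ∨ κ = 57 := by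
  set B : Matrix (Fin (κ ^ 2 + 1)) (Fin (κ ^ 2 + 1)) ℝ := A.map (↑)
  have hB : B * B + B = ((κ : ℝ) - 1) • 1 + of (fun _ _ => 1) := by
    ext i j
    have hij := congrFun (congrFun (mul_self_add_self_of_Theta_eq hfix) i) j
    simp only [B, Matrix.add_apply, mul_apply, map_apply, Matrix.smul_apply, one_apply, of_apply,
      smul_eq_mul] at hij ⊢
    exact_mod_cast hij
  have hBJ : B * of (fun _ _ => 1) = (κ : ℝ) • of (fun _ _ => 1) := by
    ext i j
    simpa [B, mul_apply] using congrArg (Int.cast : ℤ → ℝ) (hrow i)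
  have htrB : B.trace = 0 := by
    simp [B, trace, diag_eq_zero_of_Theta_eq h01 hrow hfix]
  have hκ' : (2 : ℝ) ≤ κ := by exact_mod_cast hκ
  obtain ⟨d, hd⟩ := Matrix.exists_int_mul_sqrt_eq_of_mul_self_add_self_eq (by linarith) hB hBJ
  have hsq : (d : ℝ) ^ 2 * (4 * κ - 3) = ((κ : ℝ) ^ 2 - 2 * κ) ^ 2 := by
    rw [← Real.sq_sqrt (by linarith : (0 : ℝ) ≤ 4 * κ - 3), ← mul_pow, hd, htrB,
      Fintype.card_fin]
    push_cast
    ring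
  have := Int.eq_of_sq_mul_four_mul_sub_three_eq (k := κ) (d := d) (by exact_mod_cast hsq)
  omega

theorem stmt_13 (κ : ℕ) (hκ : 2 ≤ κ)
    (A : Matrix (Fin (κ ^ 2 + 1)) (Fin (κ ^ 2 + 1)) ℤ)
    (h01 : ∀ i j, A i j = 0 ∨ A i j = 1)
    (hrow : ∀ i, ∑ j, A i j = (κ : ℤ)) (hcol : ∀ j, ∑ i, A i j = (κ : ℤ))
    (hfix : Theta (κ ^ 2 + 1) (κ : ℤ) A = A) :
    κ = 2 ∨ κ = 3 ∨ κ = 7 ∨ κ = 57 :=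
  stmt_13_general κ hκ A h01 hrow hfix
end

section
/- Let κ ≥ 2 be an integer and let P be a symmetric (0,1)-matrix of order κ(κ−1) with all row and column sums equal to κ − 1, viewed as a κ×κ matrix of blocks P_{ij} of order κ − 1, such that every block P_{ij} has at most one entry 1 in each row and at most one entry 1 in each column. If P_{i₀j₀} is the zero matrix for some indices i₀, j₀, then every other block in block-row i₀ (i.e. each P_{i₀j} with j ≠ j₀) and every other block in block-column j₀ (i.e. each P_{ij₀} with i ≠ i₀) is a permutation matrix. -/
/-!
A block of `P` has at most one `1` in each row, so each of its row sums is at most `1`. Row `a`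
of block-row `s₀` of `P` has `κ - 1` ones spread over the `κ` blocks `P_{s₀t}`, and the block
`P_{s₀t₀}` contributes none of them; hence every other block `P_{s₀t}` has all row sums equal
to `1`. A `(0,1)`-matrix with all row sums `1` and at most one `1` per column is a permutation
matrix, since its column sums are at most `1` and add up to its order. Block-column `t₀` is the
same argument applied to `Pᵀ`.
-/

open Matrix BigOperators

/-- A permutation matrix: a `(0,1)`-matrix with exactly one entry `1` in each row and column. -/
def IsPermMatrix {n : ℕ} (S : Matrix (Fin n) (Fin n) ℤ) : Prop :=
  (∀ i j, S i j = 0 ∨ S i j = 1) ∧ (∀ i, ∑ j, S i j = 1) ∧ (∀ j, ∑ i, S i j = 1)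

/-- The block `P_{st}` (for `s, t : Fin κ`) of a matrix `P` of order `κ(κ-1)`, viewed as a
`κ×κ` matrix of square blocks of order `κ-1` obtained by partitioning the rows and columns
into `κ` consecutive groups of size `κ-1`. -/
def matBlock (κ : ℕ) (P : Matrix (Fin (κ * (κ - 1))) (Fin (κ * (κ - 1))) ℤ)
    (s t : Fin κ) : Matrix (Fin (κ - 1)) (Fin (κ - 1)) ℤ :=
  Matrix.of fun a b =>
    P ⟨s.val * (κ - 1) + a.val, by
        calc s.val * (κ - 1) + a.val < s.val * (κ - 1) + (κ - 1) :=
              Nat.add_lt_add_left a.isLt _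
          _ = (s.val + 1) * (κ - 1) := by ring
          _ ≤ κ * (κ - 1) := Nat.mul_le_mul_right _ s.isLt⟩
      ⟨t.val * (κ - 1) + b.val, by
        calc t.val * (κ - 1) + b.val < t.val * (κ - 1) + (κ - 1) :=
              Nat.add_lt_add_left b.isLt _
          _ = (t.val + 1) * (κ - 1) := by ring
          _ ≤ κ * (κ - 1) := Nat.mul_le_mul_right _ t.isLt⟩

lemma Fintype.sum_le_one_of_zero_or_one {α : Type*} [Fintype α] {f : α → ℤ}
    (h01 : ∀ x, f x = 0 ∨ f x = 1)
    (hunique : ∀ x y, x ≠ y → f x = 1 → f y = 1 → False) :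
    ∑ x, f x ≤ 1 := by
  by_cases hone : ∃ x, f x = 1
  · obtain ⟨x, hx⟩ := hone
    rw [Fintype.sum_eq_single x fun y hyx ↦
      (h01 y).resolve_right fun hy ↦ hunique y x hyx hy hx]
    exact hx.le
  · simp only [not_exists] at hone
    simp [fun x ↦ (h01 x).resolve_right (hone x)]

lemma Fintype.eq_one_of_sum_eq_card_sub_one {α : Type*} [Fintype α] [DecidableEq α]
    {f : α → ℤ} (hle : ∀ x, f x ≤ 1) (hsum : ∑ x, f x = Fintype.card α - 1)
    {x₀ : α} (hx₀ : f x₀ = 0) {x : α} (hx : x ≠ x₀) : f x = 1 := by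
  have hsum_erase :
      ∑ y ∈ Finset.univ.erase x₀, f y = ∑ _y ∈ Finset.univ.erase x₀, (1 : ℤ) := by
    rw [← Finset.add_sum_erase _ _ (Finset.mem_univ x₀), hx₀, zero_add] at hsum
    rw [hsum, Finset.sum_const, nsmul_one, Finset.cast_card_erase_of_mem (Finset.mem_univ x₀),
      Finset.card_univ]
  exact (Finset.sum_eq_sum_iff_of_le fun y _ ↦ hle y).1 hsum_erase x
    (Finset.mem_erase.2 ⟨hx, Finset.mem_univ x⟩)

lemma IsPermMatrix.transpose {n : ℕ} {S : Matrix (Fin n) (Fin n) ℤ} (hS : IsPermMatrix S) :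
    IsPermMatrix Sᵀ :=
  ⟨fun i j ↦ hS.1 j i, hS.2.2, hS.2.1⟩

lemma IsPermMatrix.of_row_sum_eq_one {n : ℕ} {S : Matrix (Fin n) (Fin n) ℤ}
    (h01 : ∀ i j, S i j = 0 ∨ S i j = 1)
    (hcol : ∀ i i' j, i ≠ i' → S i j = 1 → S i' j = 1 → False)
    (hrow : ∀ i, ∑ j, S i j = 1) : IsPermMatrix S := by
  refine ⟨h01, hrow, fun j ↦ ?_⟩
  have hle : ∀ j, ∑ i, S i j ≤ 1 := fun j ↦
    Fintype.sum_le_one_of_zero_or_one (fun i ↦ h01 i j) fun i i' h ↦ hcol i i' j h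
  have htotal : ∑ j, ∑ i, S i j = ∑ _j : Fin n, (1 : ℤ) := by
    rw [Finset.sum_comm]
    simp [hrow]
  exact (Finset.sum_eq_sum_iff_of_le fun j _ ↦ hle j).1 htotal j (Finset.mem_univ j)

section Blocks

variable {κ : ℕ} (P : Matrix (Fin (κ * (κ - 1))) (Fin (κ * (κ - 1))) ℤ)

lemma matBlock_apply (s t : Fin κ) (a b : Fin (κ - 1)) :
    matBlock κ P s t a b = P (finProdFinEquiv (s, a)) (finProdFinEquiv (t, b)) := by
  simp only [matBlock, of_apply]
  congr 2 <;> ring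

lemma matBlock_transpose (s t : Fin κ) : matBlock κ Pᵀ s t = (matBlock κ P t s)ᵀ :=
  rfl

lemma sum_sum_matBlock_row (s : Fin κ) (a : Fin (κ - 1)) :
    ∑ t, ∑ b, matBlock κ P s t a b = ∑ j, P (finProdFinEquiv (s, a)) j := by
  rw [← finProdFinEquiv.sum_comp, Fintype.sum_prod_type]
  simp only [matBlock_apply]

lemma isPermMatrix_matBlock_of_matBlock_eq_zero
    (h01 : ∀ i j, P i j = 0 ∨ P i j = 1) (hrow : ∀ i, ∑ j, P i j = (κ : ℤ) - 1)
    (hblockrows : ∀ (s t : Fin κ) (a b b' : Fin (κ - 1)), b ≠ b' →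
      matBlock κ P s t a b = 1 → matBlock κ P s t a b' = 1 → False)
    (hblockcols : ∀ (s t : Fin κ) (a a' b : Fin (κ - 1)), a ≠ a' →
      matBlock κ P s t a b = 1 → matBlock κ P s t a' b = 1 → False)
    {s₀ t₀ : Fin κ} (hzero : matBlock κ P s₀ t₀ = 0) {t : Fin κ} (ht : t ≠ t₀) :
    IsPermMatrix (matBlock κ P s₀ t) := by
  have hblock01 : ∀ s t a b, matBlock κ P s t a b = 0 ∨ matBlock κ P s t a b = 1 :=
    fun s t a b ↦ matBlock_apply P s t a b ▸ h01 _ _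
  refine .of_row_sum_eq_one (hblock01 s₀ t) (hblockcols s₀ t) fun a ↦ ?_
  refine Fintype.eq_one_of_sum_eq_card_sub_one (f := fun t ↦ ∑ b, matBlock κ P s₀ t a b)
    (x₀ := t₀) (fun t ↦ ?_) ?_ ?_ ht
  · exact Fintype.sum_le_one_of_zero_or_one (hblock01 s₀ t a) (hblockrows s₀ t a)
  · rw [sum_sum_matBlock_row, hrow, Fintype.card_fin]
  · simp [hzero]

end Blocks

theorem stmt_18_general (κ : ℕ)
    (P : Matrix (Fin (κ * (κ - 1))) (Fin (κ * (κ - 1))) ℤ)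
    (h01 : ∀ i j, P i j = 0 ∨ P i j = 1)
    (hrow : ∀ i, ∑ j, P i j = (κ : ℤ) - 1) (hcol : ∀ j, ∑ i, P i j = (κ : ℤ) - 1)
    (hblockrows : ∀ (s t : Fin κ) (a b b' : Fin (κ - 1)), b ≠ b' →
      matBlock κ P s t a b = 1 → matBlock κ P s t a b' = 1 → False)
    (hblockcols : ∀ (s t : Fin κ) (a a' b : Fin (κ - 1)), a ≠ a' →
      matBlock κ P s t a b = 1 → matBlock κ P s t a' b = 1 → False)
    (s₀ t₀ : Fin κ) (hzero : matBlock κ P s₀ t₀ = 0) :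
    (∀ t : Fin κ, t ≠ t₀ → IsPermMatrix (matBlock κ P s₀ t)) ∧
    (∀ s : Fin κ, s ≠ s₀ → IsPermMatrix (matBlock κ P s t₀)) := by
  refine ⟨fun t ht ↦ isPermMatrix_matBlock_of_matBlock_eq_zero P h01 hrow hblockrows
    hblockcols hzero ht, fun s hs ↦ ?_⟩
  have hzero_transpose : matBlock κ Pᵀ t₀ s₀ = 0 := by
    rw [matBlock_transpose, hzero, transpose_zero]
  rw [← transpose_transpose (matBlock κ P s t₀), ← matBlock_transpose]
  exact (isPermMatrix_matBlock_of_matBlock_eq_zero Pᵀ (fun i j ↦ h01 j i) hcol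
      (fun s t a b b' h ↦ hblockcols t s b b' a h) (fun s t a a' b h ↦ hblockrows t s b a a' h)
      hzero_transpose hs).transpose

theorem stmt_18 (κ : ℕ) (hκ : 2 ≤ κ)
    (P : Matrix (Fin (κ * (κ - 1))) (Fin (κ * (κ - 1))) ℤ)
    (hsymm : P.IsSymm)
    (h01 : ∀ i j, P i j = 0 ∨ P i j = 1)
    (hrow : ∀ i, ∑ j, P i j = (κ : ℤ) - 1) (hcol : ∀ j, ∑ i, P i j = (κ : ℤ) - 1)
    (hblockrows : ∀ (s t : Fin κ) (a b b' : Fin (κ - 1)), b ≠ b' →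
      matBlock κ P s t a b = 1 → matBlock κ P s t a b' = 1 → False)
    (hblockcols : ∀ (s t : Fin κ) (a a' b : Fin (κ - 1)), a ≠ a' →
      matBlock κ P s t a b = 1 → matBlock κ P s t a' b = 1 → False)
    (s₀ t₀ : Fin κ) (hzero : matBlock κ P s₀ t₀ = 0) :
    (∀ t : Fin κ, t ≠ t₀ → IsPermMatrix (matBlock κ P s₀ t)) ∧
    (∀ s : Fin κ, s ≠ s₀ → IsPermMatrix (matBlock κ P s t₀)) :=
  stmt_18_general κ P h01 hrow hcol hblockrows hblockcols s₀ t₀ hzero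
end
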